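/- arXiv:1203.3829 — 3 statements merged into one kernel-verified Lean document; each statement's English description precedes it below -/
import Mathlib

section
/- Let F(z₁,z₂,w) = (z₁√w, z₂ w, w), using the principal square root on {Re w > 0}. If (z₁*,z₂*,w*) = F(z₁,z₂,w) satisfies Im w* = |z₁*|² + |z₂*|² and Re w > 0, then w·(1 − 2i|z₂|² w̄)² = w̄·(i|z₁|² + √(1 − 2i|z₂|² w̄ − |z₁|⁴))², for (z₁,z₂,w) in a sufficiently small neighborhood of (0,0,0) intersected with {Re w > 0}. -/
/-!
Write `r = |w|`, `a = |z₁|²`, `b = |z₂|²`. Since `|√w|² = r`, the quadric condition reads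
`Im w = a r + b r²`, i.e. `w̄ = w − 2i(a r + b r²)`. With this, `s = (w̄ + i a r) / r` satisfies
`s² = 1 − 2i b w̄ − a²`, and `Re s = Re w / r > 0`, so `s` is the principal square root. Then
`i a + s = w (1 − 2i b w̄) / r`, and the identity follows from `w w̄ = r²`.
-/

open Complex ComplexConjugate

namespace Complex

lemma norm_cpow_half_sq (w : ℂ) : ‖w ^ (1 / 2 : ℂ)‖ ^ 2 = ‖w‖ := by
  rcases eq_or_ne w 0 with rfl | hw
  · simp
  · rw [norm_cpow_of_ne_zero hw]
    norm_num
    rw [← Real.sqrt_eq_rpow, Real.sq_sqrt (norm_nonneg w)]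

section Quadric

variable {w : ℂ} {p q : ℝ}

lemma conj_eq_sub_of_im_eq (him : w.im = p ^ 2 * ‖w‖ + q ^ 2 * ‖w‖ ^ 2) :
    conj w = w - 2 * I * ((p : ℂ) ^ 2 * ‖w‖ + (q : ℂ) ^ 2 * (‖w‖ : ℂ) ^ 2) := by
  rw [eq_sub_iff_add_eq, ← eq_sub_iff_add_eq', sub_conj, him]
  push_cast
  ring

lemma cpow_half_eq_of_im_eq (hre : 0 < w.re) (him : w.im = p ^ 2 * ‖w‖ + q ^ 2 * ‖w‖ ^ 2) :
    (1 - 2 * I * (q : ℂ) ^ 2 * conj w - (p : ℂ) ^ 4) ^ (1 / 2 : ℂ)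
      = (conj w + I * (p : ℂ) ^ 2 * ‖w‖) / ‖w‖ := by
  have hr : 0 < ‖w‖ := norm_pos_iff.mpr (ne_zero_of_re_pos hre)
  have hr' : (‖w‖ : ℂ) ≠ 0 := ofReal_ne_zero.mpr hr.ne'
  have hsq : 1 - 2 * I * (q : ℂ) ^ 2 * conj w - (p : ℂ) ^ 4
      = ((conj w + I * (p : ℂ) ^ 2 * ‖w‖) / ‖w‖) ^ 2 := by
    field_simp
    linear_combination -conj w * conj_eq_sub_of_im_eq him - mul_conj' w
      - (p : ℂ) ^ 4 * (‖w‖ : ℂ) ^ 2 * I_sq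
  have hre' : 0 < ((conj w + I * (p : ℂ) ^ 2 * ‖w‖) / ‖w‖).re := by
    rw [div_ofReal_re]
    simpa [← ofReal_pow] using div_pos hre hr
  rw [hsq, one_div, sq_cpow_two_inv hre']

theorem mul_sq_eq_conj_mul_sq_of_im_eq (hre : 0 < w.re)
    (him : w.im = p ^ 2 * ‖w‖ + q ^ 2 * ‖w‖ ^ 2) :
    w * (1 - 2 * I * (q : ℂ) ^ 2 * conj w) ^ 2
      = conj w *
        (I * (p : ℂ) ^ 2 + (1 - 2 * I * (q : ℂ) ^ 2 * conj w - (p : ℂ) ^ 4) ^ (1 / 2 : ℂ)) ^ 2 := by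
  have hr' : (‖w‖ : ℂ) ≠ 0 := ofReal_ne_zero.mpr (norm_ne_zero_iff.mpr (ne_zero_of_re_pos hre))
  have hsum : I * (p : ℂ) ^ 2 + (conj w + I * (p : ℂ) ^ 2 * ‖w‖) / ‖w‖
      = w * (1 - 2 * I * (q : ℂ) ^ 2 * conj w) / ‖w‖ := by
    field_simp
    linear_combination conj_eq_sub_of_im_eq him + 2 * I * (q : ℂ) ^ 2 * mul_conj' w
  rw [cpow_half_eq_of_im_eq hre him, hsum]
  field_simp
  linear_combination -w * (1 - 2 * I * (q : ℂ) ^ 2 * conj w) ^ 2 * mul_conj' w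

end Quadric

end Complex

/-- The blow-up `F(z₁,z₂,w) = (z₁√w, z₂w, w)` (principal square root on `Re w > 0`):
if the image lies on the strictly pseudoconvex quadric `Im w* = |z₁*|² + |z₂*|²`, then in a
sufficiently small neighbourhood of the origin intersected with `{Re w > 0}` one has
`w(1 − 2i|z₂|²w̄)² = w̄(i|z₁|² + √(1 − 2i|z₂|²w̄ − |z₁|⁴))²`. -/
theorem stmt_4 : ∃ ε > (0:ℝ), ∀ z₁ z₂ w : ℂ,
    ‖z₁‖ < ε → ‖z₂‖ < ε → ‖w‖ < ε → 0 < w.re →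
    w.im = ‖z₁ * w ^ ((1 : ℂ)/2)‖ ^ 2 + ‖z₂ * w‖ ^ 2 →
    w * (1 - 2 * Complex.I * ((‖z₂‖ : ℂ)) ^ 2 * (starRingEnd ℂ) w) ^ 2
      = (starRingEnd ℂ) w *
        (Complex.I * ((‖z₁‖ : ℂ)) ^ 2 +
          (1 - 2 * Complex.I * ((‖z₂‖ : ℂ)) ^ 2 * (starRingEnd ℂ) w
            - ((‖z₁‖ : ℂ)) ^ 4) ^ ((1 : ℂ)/2)) ^ 2 := by
  refine ⟨1, one_pos, fun z₁ z₂ w _ _ _ hre him => ?_⟩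
  rw [norm_mul, norm_mul, mul_pow, mul_pow, norm_cpow_half_sq] at him
  exact mul_sq_eq_conj_mul_sq_of_im_eq hre him
end

section
/- Let F⁻(z₁,z₂,w) = (z₁√w, z₂w, w) where √ is the branch of square root on {Re w < 0} with π/2 < Arg w < 3π/2 (so √w = i√(−w) with the principal root). If (z₁,z₂,w) lies in a small neighborhood of the origin with Re w < 0 and satisfies the defining equation of M from the blow-up of the quadric {Im w* = |z₁*|²+|z₂*|²}, then F⁻(z₁,z₂,w) lies on the indefinite quadric Q⁻ = {Im w* = −|z₁*|² + |z₂*|²}. -/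
/-!
Multiplying the equation of `M` by `w` gives `(w c)² = (|w| (i|z₁|² + s))²`, where
`c = 1 - 2i|z₂|²w̄` and `s` is the principal root of `c - |z₁|⁴`. Since `Re (w c) = Re w < 0` and
`Re s ≥ 0`, the sign is forced: `w c = -|w| (i|z₁|² + s)`. Its real part gives `Re s > 0`, the
imaginary part of `s² = c - |z₁|⁴` then gives `Im s = |z₂|² |w|`, and the imaginary part of
`w c` becomes `Im w = -|z₁|²|w| + |z₂|²|w|²`, which is the equation of `Q⁻` at `F⁻(z₁,z₂,w)`.
-/

open Complex ComplexConjugate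

lemma Complex.sq_norm_cpow_one_div_two (x : ℂ) : ‖x ^ (1 / 2 : ℂ)‖ ^ 2 = ‖x‖ := by
  rw [show (1 / 2 : ℂ) = ((1 / 2 : ℝ) : ℂ) by norm_num, norm_cpow_real, ← Real.sqrt_eq_rpow,
    Real.sq_sqrt (norm_nonneg x)]

lemma Complex.eq_neg_of_sq_eq_sq_of_re_neg {p q : ℂ} (h : p ^ 2 = q ^ 2) (hp : p.re < 0)
    (hq : 0 ≤ q.re) : p = -q :=
  (sq_eq_sq_iff_eq_or_eq_neg.mp h).resolve_left fun hpq => by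
    rw [hpq] at hp
    linarith

lemma Complex.im_eq_of_mul_sq_eq_conj_mul_sq {a b : ℝ} {w s : ℂ} (hw : w.re < 0)
    (hs : s ^ 2 = 1 - 2 * I * (b : ℂ) ^ 2 * conj w - (a : ℂ) ^ 4) (hs_re : 0 ≤ s.re)
    (h : w * (1 - 2 * I * (b : ℂ) ^ 2 * conj w) ^ 2 = conj w * (I * (a : ℂ) ^ 2 + s) ^ 2) :
    w.im = -(a ^ 2 * ‖w‖) + b ^ 2 * ‖w‖ ^ 2 := by
  set c := 1 - 2 * I * (b : ℂ) ^ 2 * conj w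
  have hnorm : w.re ^ 2 + w.im ^ 2 = ‖w‖ ^ 2 := by
    rw [← normSq_eq_norm_sq, normSq_apply]; ring
  have hc_re : (w * c).re = w.re := by simp [c, ← ofReal_pow]; ring
  have hc_im : (w * c).im = w.im - 2 * b ^ 2 * ‖w‖ ^ 2 := by
    simp [c, ← ofReal_pow]; linear_combination (-2 * b ^ 2) * hnorm
  have hsq : (w * c) ^ 2 = (‖w‖ * (I * (a : ℂ) ^ 2 + s)) ^ 2 := by
    rw [mul_pow, mul_pow, ← mul_conj', mul_assoc, ← h]; ring
  have hu_re : 0 ≤ ((‖w‖ : ℂ) * (I * (a : ℂ) ^ 2 + s)).re := by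
    simpa [← ofReal_pow] using mul_nonneg (norm_nonneg w) hs_re
  have hsign := eq_neg_of_sq_eq_sq_of_re_neg hsq (hc_re ▸ hw) hu_re
  have hw_re : w.re = -(‖w‖ * s.re) := by
    simpa [hc_re, ← ofReal_pow] using congrArg re hsign
  have hw_im : w.im - 2 * b ^ 2 * ‖w‖ ^ 2 = -(‖w‖ * (a ^ 2 + s.im)) := by
    simpa [hc_im, ← ofReal_pow] using congrArg im hsign
  have hs_im : 2 * s.re * s.im = -(2 * b ^ 2 * w.re) := by
    have := congrArg im hs
    simp [c, sq, ← ofReal_pow] at this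
    linarith
  have hs_re_pos : 0 < s.re := by nlinarith [norm_nonneg w]
  have hs_im_eq : s.im = b ^ 2 * ‖w‖ := by
    refine mul_left_cancel₀ (mul_ne_zero two_ne_zero hs_re_pos.ne') ?_
    linear_combination hs_im - 2 * b ^ 2 * hw_re
  linear_combination hw_im - ‖w‖ * hs_im_eq

/-- The branch `F⁻(z₁,z₂,w) = (z₁√w, z₂w, w)` with `√w = i√(−w)` on `{Re w < 0}`:
a point of the hypersurface `M` (from the blow-up of the definite quadric) with `Re w < 0`
and close to the origin is mapped onto the indefinite quadric
`Q⁻ = {Im w* = −|z₁*|² + |z₂*|²}`. -/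
theorem stmt_5 : ∃ ε > (0:ℝ), ∀ z₁ z₂ w : ℂ,
    ‖z₁‖ < ε → ‖z₂‖ < ε → ‖w‖ < ε → w.re < 0 →
    w * (1 - 2 * Complex.I * ((‖z₂‖ : ℂ)) ^ 2 * (starRingEnd ℂ) w) ^ 2
      = (starRingEnd ℂ) w *
        (Complex.I * ((‖z₁‖ : ℂ)) ^ 2 +
          (1 - 2 * Complex.I * ((‖z₂‖ : ℂ)) ^ 2 * (starRingEnd ℂ) w
            - ((‖z₁‖ : ℂ)) ^ 4) ^ ((1 : ℂ)/2)) ^ 2 →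
    w.im = -‖z₁ * (Complex.I * (-w) ^ ((1 : ℂ)/2))‖ ^ 2
      + ‖z₂ * w‖ ^ 2 := by
  refine ⟨1, one_pos, fun z₁ z₂ w _ _ _ hw h => ?_⟩
  rw [im_eq_of_mul_sq_eq_conj_mul_sq hw (by rw [one_div, cpow_ofNat_inv_pow])
    (by rw [one_div, cpow_inv_two_re]; positivity) h]
  simp only [norm_mul, mul_pow, norm_I, one_mul, sq_norm_cpow_one_div_two, norm_neg]
end

section
/- For the hypersurface M^log = {w = w̄e^{2izz̄}} with U₁ = {|z| < ε, |w| < ε} and p = (0, ε/2): every point (z,w) in the j-th Segre set S^p_j of p satisfies |w| ≥ (ε/2)·e^{-2jε²}. -/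
/-- Segre varieties of `M^log`: `Q_{(a,b)} = {(z,w) : w = b̄ e^{2izā}}`. -/
noncomputable def segMlog' (ζ : ℂ × ℂ) : Set (ℂ × ℂ) :=
  {p : ℂ × ℂ | p.2 = (starRingEnd ℂ) ζ.2 * Complex.exp (2 * Complex.I * p.1 * (starRingEnd ℂ) ζ.1)}

/-- The Segre sets of `p = (0, ε/2)` in `U₁ = {|z| < ε, |w| < ε}`:
`S^p_0 = {p}`, `S^p_{j+1} = (⋃_{r ∈ S^p_j} Q_r) ∩ U₁`. -/
noncomputable def segreSet (ε : ℝ) : ℕ → Set (ℂ × ℂ)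
  | 0 => {((0 : ℂ), ((ε : ℂ) / 2))}
  | j + 1 => {q : ℂ × ℂ | (∃ r ∈ segreSet ε j, q ∈ segMlog' r) ∧
      ‖q.1‖ < ε ∧ ‖q.2‖ < ε}

lemma segre_aux (ε : ℝ) (hε : 0 < ε) (j : ℕ) (q : ℂ × ℂ) (hq : q ∈ segreSet ε j) :
    ‖q.1‖ < ε ∧ (ε / 2) * Real.exp (-(2 * j * ε ^ 2)) ≤ ‖q.2‖ := by
  induction j generalizing q with
  | zero =>
    simp only [segreSet, Set.mem_singleton_iff] at hq
    subst hq
    constructor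
    · simpa using hε
    · simp only [Nat.cast_zero, mul_zero, zero_mul, neg_zero, Real.exp_zero, mul_one]
      rw [show ((ε : ℂ) / 2) = ((ε / 2 : ℝ) : ℂ) by push_cast; ring]
      rw [Complex.norm_real, Real.norm_of_nonneg (by linarith)]
  | succ j ih =>
    obtain ⟨⟨r, hr, hmem⟩, hz, hw⟩ := hq
    refine ⟨hz, ?_⟩
    obtain ⟨hr1, hr2⟩ := ih r hr
    have hmem' : q.2 = (starRingEnd ℂ) r.2 * Complex.exp (2 * Complex.I * q.1 * (starRingEnd ℂ) r.1) :=
      hmem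
    rw [hmem', norm_mul, Complex.norm_exp, Complex.norm_conj]
    have hre : -(2 * ε ^ 2) ≤ (2 * Complex.I * q.1 * (starRingEnd ℂ) r.1).re := by
      have h1 : |(2 * Complex.I * q.1 * (starRingEnd ℂ) r.1).re|
          ≤ ‖(2 * Complex.I * q.1 * (starRingEnd ℂ) r.1)‖ :=
        Complex.abs_re_le_norm _
      have h2 : ‖(2 * Complex.I * q.1 * (starRingEnd ℂ) r.1)‖
          = 2 * ‖q.1‖ * ‖r.1‖ := by
        simp [norm_mul, Complex.norm_conj]
      have h3 : 2 * ‖q.1‖ * ‖r.1‖ ≤ 2 * ε ^ 2 := by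
        have := norm_nonneg q.1
        have := norm_nonneg r.1
        nlinarith
      have := neg_abs_le (2 * Complex.I * q.1 * (starRingEnd ℂ) r.1).re
      linarith
    calc (ε / 2) * Real.exp (-(2 * (j + 1 : ℕ) * ε ^ 2))
        = (ε / 2) * Real.exp (-(2 * j * ε ^ 2)) * Real.exp (-(2 * ε ^ 2)) := by
          have h : Real.exp (-(2 * (j + 1 : ℕ) * ε ^ 2))
              = Real.exp (-(2 * j * ε ^ 2)) * Real.exp (-(2 * ε ^ 2)) := by
            rw [← Real.exp_add]; congr 1; push_cast; ring
          rw [h]; ring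
      _ ≤ ‖r.2‖ * Real.exp ((2 * Complex.I * q.1 * (starRingEnd ℂ) r.1).re) := by
          apply mul_le_mul hr2 (Real.exp_le_exp.mpr hre) (Real.exp_pos _).le
            (norm_nonneg _)

/-- Every point `(z,w)` of the `j`-th Segre set of `p = (0, ε/2)` for `M^log` satisfies
`|w| ≥ (ε/2)·e^{−2jε²}`; hence no Segre set of fixed depth exhausts a punctured
neighbourhood of `X = {w = 0}`. -/
theorem stmt_17 (ε : ℝ) (hε : 0 < ε) (j : ℕ) (q : ℂ × ℂ) (hq : q ∈ segreSet ε j) :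
    (ε / 2) * Real.exp (-(2 * j * ε ^ 2)) ≤ ‖q.2‖ := by
  exact (segre_aux ε hε j q hq).2
end
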